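/- Let d and k be positive integers with 1 ≤ k ≤ d, set r = √((d − k)/d), and let G ≥ 0. Let (g^{(t)})_{t≥1} be vectors in ℝ^d with ‖g^{(t)}‖ ≤ G for all t. Define the error-accumulation sequence Δ^{(1)} = 0 and Δ^{(t+1)} = (g^{(t)} + Δ^{(t)}) − sp(g^{(t)} + Δ^{(t)}, k) for t ≥ 1, where sp(x, k) keeps k entries of x of largest absolute value and zeroes the rest. Then for every t ≥ 1, ‖Δ^{(t+1)}‖ ≤ ((r − r^{t+1})/(1 − r))·G, where r^{t} denotes the t-th power of r. -/

import Mathlib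

/-!
Top-`k` sparsification keeps the `k` largest of the `d` squared entries, so the discarded part
carries at most a fraction `(d - k) / d` of the squared norm: the residual is contracted by
`r = √((d - k) / d) < 1`. Hence `‖Δ (t + 1)‖ ≤ r (G + ‖Δ t‖)`, and unrolling this recursion from
`Δ 1 = 0` gives the geometric sum `(r + r² + ⋯ + r^t) G = (r - r^(t+1)) / (1 - r) · G`.
-/

open Finset

section Sparsification

variable {ι : Type*} [Fintype ι] [DecidableEq ι]

/-- Summing `x j ^ 2 ≤ x i ^ 2` over all pairs `i ∈ S`, `j ∉ S`. -/
lemma card_mul_sum_compl_sq_le (x : ι → ℝ) (S : Finset ι)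
    (hord : ∀ i ∈ S, ∀ j ∉ S, |x j| ≤ |x i|) :
    (#S : ℝ) * ∑ j ∈ Sᶜ, x j ^ 2 ≤ #Sᶜ * ∑ i ∈ S, x i ^ 2 := by
  have hpair : ∀ i ∈ S, ∀ j ∈ Sᶜ, x j ^ 2 ≤ x i ^ 2 := fun i hi j hj =>
    sq_le_sq.mpr (hord i hi j (mem_compl.mp hj))
  calc (#S : ℝ) * ∑ j ∈ Sᶜ, x j ^ 2 = ∑ i ∈ S, ∑ j ∈ Sᶜ, x j ^ 2 := by
        rw [sum_const, nsmul_eq_mul]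
    _ ≤ ∑ i ∈ S, ∑ _j ∈ Sᶜ, x i ^ 2 := sum_le_sum fun i hi => sum_le_sum (hpair i hi)
    _ = #Sᶜ * ∑ i ∈ S, x i ^ 2 := by
        rw [mul_sum]; simp only [sum_const, nsmul_eq_mul]

lemma card_mul_sum_compl_sq_le_card_compl_mul_sum_sq (x : ι → ℝ) (S : Finset ι)
    (hord : ∀ i ∈ S, ∀ j ∉ S, |x j| ≤ |x i|) :
    (Fintype.card ι : ℝ) * ∑ j ∈ Sᶜ, x j ^ 2 ≤ #Sᶜ * ∑ i, x i ^ 2 := by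
  have hcard : (Fintype.card ι : ℝ) = #S + #Sᶜ := by
    rw [← Nat.cast_add, card_add_card_compl]
  rw [hcard, ← sum_add_sum_compl S, add_mul, mul_add]
  linarith [card_mul_sum_compl_sq_le x S hord]

lemma norm_sq_eq_sum_compl_of_eq_ite {x y : EuclideanSpace ℝ ι} {S : Finset ι}
    (hy : ∀ i, y i = if i ∈ S then 0 else x i) :
    ‖y‖ ^ 2 = ∑ j ∈ Sᶜ, x j ^ 2 := by
  rw [EuclideanSpace.norm_sq_eq, ← sum_add_sum_compl S]
  simp only [hy, Real.norm_eq_abs, sq_abs]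
  rw [sum_eq_zero fun i hi => by simp [hi], zero_add]
  exact sum_congr rfl fun j hj => by simp [mem_compl.mp hj]

theorem norm_sparsify_residual_le {x y : EuclideanSpace ℝ ι} (S : Finset ι)
    (hord : ∀ i ∈ S, ∀ j ∉ S, |x j| ≤ |x i|)
    (hy : ∀ i, y i = if i ∈ S then 0 else x i) :
    ‖y‖ ≤ √(((Fintype.card ι : ℝ) - #S) / Fintype.card ι) * ‖x‖ := by
  rcases (Fintype.card ι).eq_zero_or_pos with hι | hι
  · have : IsEmpty ι := Fintype.card_eq_zero_iff.mp hι
    simp [Subsingleton.elim y 0]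
  have hn : (0 : ℝ) < Fintype.card ι := by exact_mod_cast hι
  have hcompl : (#Sᶜ : ℝ) = Fintype.card ι - #S := by
    rw [card_compl, Nat.cast_sub (card_le_univ S)]
  have hc : 0 ≤ ((Fintype.card ι : ℝ) - #S) / Fintype.card ι := by
    rw [← hcompl]; positivity
  rw [← Real.sqrt_sq (norm_nonneg x), ← Real.sqrt_mul hc,
    Real.le_sqrt (norm_nonneg y) (mul_nonneg hc (sq_nonneg _)),
    norm_sq_eq_sum_compl_of_eq_ite hy, div_mul_eq_mul_div, le_div_iff₀ hn, ← hcompl,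
    EuclideanSpace.norm_sq_eq]
  simpa only [Real.norm_eq_abs, sq_abs, mul_comm] using
    card_mul_sum_compl_sq_le_card_compl_mul_sum_sq (fun i => x i) S hord

end Sparsification

lemma sqrt_sub_div_lt_one {d k : ℕ} (hk : 1 ≤ k) (hkd : k ≤ d) :
    √(((d : ℝ) - k) / d) < 1 := by
  have hk' : (1 : ℝ) ≤ k := by exact_mod_cast hk
  have hd : (0 : ℝ) < d := by exact_mod_cast hk.trans hkd
  rw [Real.sqrt_lt' one_pos, one_pow, div_lt_one hd]
  linarith

/-- `(r - r ^ t) / (1 - r) = r + r ^ 2 + ⋯ + r ^ (t - 1)`. -/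
lemma le_geom_mul_of_le_mul_add {a : ℕ → ℝ} {r G : ℝ} (hr0 : 0 ≤ r) (hr1 : r ≠ 1)
    (ha1 : a 1 = 0) (ha : ∀ t ≥ 1, a (t + 1) ≤ r * (G + a t)) :
    ∀ t ≥ 1, a t ≤ (r - r ^ t) / (1 - r) * G := by
  have h1r : 1 - r ≠ 0 := sub_ne_zero.mpr hr1.symm
  intro t ht
  induction t, ht using Nat.le_induction with
  | base => simp [ha1]
  | succ t ht ih =>
    calc a (t + 1) ≤ r * (G + a t) := ha t ht
      _ ≤ r * (G + (r - r ^ t) / (1 - r) * G) := by gcongr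
      _ = (r - r ^ (t + 1)) / (1 - r) * G := by field_simp; ring

theorem stmt_7_general (d k : ℕ) (hk1 : 1 ≤ k) (hkd : k ≤ d)
    (r : ℝ) (hr : r = Real.sqrt (((d : ℝ) - k) / d))
    (G : ℝ)
    (g Δ : ℕ → EuclideanSpace ℝ (Fin d))
    (hg : ∀ t ≥ 1, ‖g t‖ ≤ G)
    (hΔ1 : Δ 1 = 0)
    (hΔ : ∀ t ≥ 1, ∃ S : Finset (Fin d), S.card = k ∧
      (∀ i ∈ S, ∀ j ∉ S, |(g t + Δ t) j| ≤ |(g t + Δ t) i|) ∧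
      ∀ i, Δ (t + 1) i = if i ∈ S then 0 else (g t + Δ t) i) :
    ∀ t ≥ 1, ‖Δ (t + 1)‖ ≤ ((r - r ^ (t + 1)) / (1 - r)) * G := by
  have hr0 : 0 ≤ r := hr ▸ Real.sqrt_nonneg _
  have hr1 : r < 1 := hr ▸ sqrt_sub_div_lt_one hk1 hkd
  have hstep : ∀ t ≥ 1, ‖Δ (t + 1)‖ ≤ r * (G + ‖Δ t‖) := by
    intro t ht
    obtain ⟨S, hcard, hord, hres⟩ := hΔ t ht
    calc ‖Δ (t + 1)‖ ≤ r * ‖g t + Δ t‖ := by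
          simpa only [hr, hcard, Fintype.card_fin] using norm_sparsify_residual_le S hord hres
      _ ≤ r * (G + ‖Δ t‖) := by gcongr; exact norm_add_le_of_le (hg t ht) le_rfl
  intro t ht
  exact le_geom_mul_of_le_mul_add (a := fun t => ‖Δ t‖) hr0 hr1.ne (by simp [hΔ1]) hstep
    (t + 1) (by omega)

/-- Geometric bound on the error-accumulation sequence of top-`k`
sparsification with error feedback. -/
theorem stmt_7 (d k : ℕ) (hk1 : 1 ≤ k) (hkd : k ≤ d)
    (r : ℝ) (hr : r = Real.sqrt (((d : ℝ) - k) / d))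
    (G : ℝ) (hG : 0 ≤ G)
    (g Δ : ℕ → EuclideanSpace ℝ (Fin d))
    (hg : ∀ t ≥ 1, ‖g t‖ ≤ G)
    (hΔ1 : Δ 1 = 0)
    (hΔ : ∀ t ≥ 1, ∃ S : Finset (Fin d), S.card = k ∧
      (∀ i ∈ S, ∀ j ∉ S, |(g t + Δ t) j| ≤ |(g t + Δ t) i|) ∧
      ∀ i, Δ (t + 1) i = if i ∈ S then 0 else (g t + Δ t) i) :
    ∀ t ≥ 1, ‖Δ (t + 1)‖ ≤ ((r - r ^ (t + 1)) / (1 - r)) * G :=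
  stmt_7_general d k hk1 hkd r hr G g Δ hg hΔ1 hΔ
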